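/- Let A be a unital C*-algebra, let H₁ and H₂ be complex Hilbert spaces, and let π₁ : A → B(H₁) and π₂ : A → B(H₂) be unital *-homomorphisms. Let V denote the weak*-closure of the linear span of {φ_ζ : ζ ∈ H₂} inside the continuous dual A*, where φ_ζ is the vector state of ζ with respect to π₂. Then the set W = {ξ ∈ H₁ : φ_ξ ∈ V} (where φ_ξ is the vector state of ξ with respect to π₁) is a norm-closed linear subspace of H₁ which is invariant under π₁(a) for every a ∈ A. -/

import Mathlib

open scoped CStarAlgebra InnerProductSpace

/-!
Polarization writes `a ↦ ⟪π₂ (star b) ζ, π₂ a (π₂ c ζ)⟫ = φ_ζ (b * a * c)` as a combination of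
vector states of `π₂`, so `V` is stable under `φ ↦ φ (b * · * c)`. Hence the preannihilator `N` of
`V` in `A` is a left ideal, and by Hahn–Banach in the locally convex space `WeakDual ℂ A` (whose
continuous functionals are evaluations) a functional lies in `V` iff it kills `N`. Since
`φ_ξ (star a * a) = ‖π₁ a ξ‖²`, this gives `W = ⋂ a ∈ N, ker (π₁ a)`; invariance comes from
`φ_{π₁ a ξ} = φ_ξ (star a * · * a)`.
-/

/-- The vector state `a ↦ ⟪ξ, π a ξ⟫` associated to a `*`-representation `π` of a unital
C*-algebra on a Hilbert space and a vector `ξ`, regarded as an element of the continuous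
dual of `A` equipped with the weak-* topology. -/
noncomputable def vecState {A H : Type*} [CStarAlgebra A] [NormedAddCommGroup H]
    [InnerProductSpace ℂ H] [CompleteSpace H] (π : A →⋆ₐ[ℂ] (H →L[ℂ] H)) (ξ : H) :
    WeakDual ℂ A :=
  ((innerSL ℂ ξ).comp (ContinuousLinearMap.apply ℂ H ξ)).comp
    { toLinearMap := (π : A →ₐ[ℂ] (H →L[ℂ] H)).toLinearMap
      cont := map_continuous π }

open RCLike

theorem LinearMap.eq_zero_of_re_apply_lt {𝕜 E : Type*} [RCLike 𝕜] [AddCommGroup E] [Module 𝕜 E]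
    (f : E →ₗ[𝕜] 𝕜) {S : Submodule 𝕜 E} {u : ℝ} (h : ∀ y ∈ S, re (f y) < u) {y : E}
    (hy : y ∈ S) : f y = 0 := by
  by_contra hfy
  have := h (((u : 𝕜) / f y) • y) (S.smul_mem _ hy)
  rw [map_smul, smul_eq_mul, div_mul_cancel₀ _ hfy, ofReal_re] at this
  exact lt_irrefl u this

theorem Submodule.exists_strongDual_eq_zero_ne_zero {𝕜 E : Type*} [RCLike 𝕜] [AddCommGroup E]
    [Module 𝕜 E] [Module ℝ E] [IsScalarTower ℝ 𝕜 E] [TopologicalSpace E]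
    [IsTopologicalAddGroup E] [ContinuousSMul 𝕜 E] [LocallyConvexSpace ℝ E]
    {S : Submodule 𝕜 E} (hS : IsClosed (S : Set E)) {x : E} (hx : x ∉ S) :
    ∃ f : StrongDual 𝕜 E, (∀ y ∈ S, f y = 0) ∧ f x ≠ 0 := by
  obtain ⟨f, u, hS_lt, hx_gt⟩ :=
    RCLike.geometric_hahn_banach_closed_point (𝕜 := 𝕜) (S.restrictScalars ℝ).convex hS hx
  refine ⟨f, fun y hy => (f : E →ₗ[𝕜] 𝕜).eq_zero_of_re_apply_lt hS_lt hy, fun hfx => ?_⟩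
  have h0 := hS_lt 0 S.zero_mem
  rw [map_zero, zero_re] at h0
  rw [hfx, zero_re] at hx_gt
  linarith

namespace WeakDual

section Semiring

variable {𝕜 E F : Type*} [CommSemiring 𝕜] [TopologicalSpace 𝕜] [ContinuousAdd 𝕜]
  [ContinuousConstSMul 𝕜 𝕜] [AddCommMonoid E] [Module 𝕜 E] [TopologicalSpace E]
  [AddCommMonoid F] [Module 𝕜 F] [TopologicalSpace F]

def dualMap (u : E →L[𝕜] F) : WeakDual 𝕜 F →L[𝕜] WeakDual 𝕜 E where
  toFun φ := ContinuousLinearMap.comp φ u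
  map_add' _ _ := rfl
  map_smul' _ _ := rfl
  cont := continuous_of_continuous_eval fun x => eval_continuous (u x)

@[simp]
theorem dualMap_apply (u : E →L[𝕜] F) (φ : WeakDual 𝕜 F) (x : E) :
    dualMap u φ x = φ (u x) :=
  rfl

def preannihilator (V : Set (WeakDual 𝕜 E)) : Set E :=
  {x | ∀ φ ∈ V, φ x = 0}

end Semiring

variable {𝕜 E : Type*} [RCLike 𝕜] [AddCommGroup E] [Module 𝕜 E] [TopologicalSpace E]

instance : IsScalarTower ℝ 𝕜 (WeakDual 𝕜 E) :=
  ⟨fun r c φ => DFunLike.ext _ _ fun x => smul_assoc r c (φ x)⟩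

instance : LocallyConvexSpace ℝ (WeakDual 𝕜 E) :=
  (topDualPairing 𝕜 E).weakBilin_withSeminorms.toLocallyConvexSpace

theorem mem_iff_forall_mem_preannihilator {V : Submodule 𝕜 (WeakDual 𝕜 E)}
    (hV : IsClosed (V : Set (WeakDual 𝕜 E))) {φ : WeakDual 𝕜 E} :
    φ ∈ V ↔ ∀ x ∈ preannihilator (V : Set (WeakDual 𝕜 E)), φ x = 0 := by
  refine ⟨fun hφ x hx => hx φ hφ, fun h => ?_⟩
  by_contra hφ
  obtain ⟨f, hfV, hfφ⟩ := V.exists_strongDual_eq_zero_ne_zero hV hφ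
  obtain ⟨x, rfl⟩ := LinearMap.dualEmbedding_surjective (topDualPairing 𝕜 E) f
  exact hfφ (h x hfV)

end WeakDual

open ContinuousLinearMap WeakDual

section Representation

variable {A H : Type*} [CStarAlgebra A] [NormedAddCommGroup H] [InnerProductSpace ℂ H]
  [CompleteSpace H] (π : A →⋆ₐ[ℂ] (H →L[ℂ] H))

noncomputable def vecFunctional (x y : H) : WeakDual ℂ A :=
  ((innerSL ℂ x).comp (ContinuousLinearMap.apply ℂ H y)).comp
    { toLinearMap := (π : A →ₐ[ℂ] (H →L[ℂ] H)).toLinearMap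
      cont := map_continuous π }

@[simp]
theorem vecFunctional_apply (x y : H) (a : A) : vecFunctional π x y a = ⟪x, π a y⟫_ℂ :=
  rfl

@[simp]
theorem vecState_apply (ξ : H) (a : A) : vecState π ξ a = ⟪ξ, π a ξ⟫_ℂ :=
  rfl

theorem continuous_vecState : Continuous (vecState π) :=
  continuous_of_continuous_eval fun a => continuous_id.inner (π a).continuous

theorem vecState_apply_star_mul_self (ξ : H) (a : A) :
    vecState π ξ (star a * a) = ⟪π a ξ, π a ξ⟫_ℂ := by
  rw [vecState_apply, map_mul, map_star, star_eq_adjoint, mul_apply_eq_comp, adjoint_inner_right]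

theorem four_smul_vecFunctional (x y : H) :
    (4 : ℂ) • vecFunctional π x y =
      vecState π (x + y) - vecState π (x - y)
        - Complex.I • vecState π (x + Complex.I • y)
        + Complex.I • vecState π (x - Complex.I • y) := by
  refine DFunLike.ext _ _ fun a => ?_
  change 4 * ⟪x, π a y⟫_ℂ = ⟪x + y, π a (x + y)⟫_ℂ - ⟪x - y, π a (x - y)⟫_ℂ
    - Complex.I * ⟪x + Complex.I • y, π a (x + Complex.I • y)⟫_ℂ
    + Complex.I * ⟪x - Complex.I • y, π a (x - Complex.I • y)⟫_ℂ
  simp only [map_add, map_sub, map_smul, inner_add_left, inner_add_right, inner_sub_left,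
    inner_sub_right, inner_smul_left, inner_smul_right, Complex.conj_I]
  linear_combination (2 * ⟪x, π a y⟫_ℂ - 2 * ⟪y, π a x⟫_ℂ) * Complex.I_sq

theorem vecFunctional_mem_span_vecState (x y : H) :
    vecFunctional π x y ∈ Submodule.span ℂ (Set.range (vecState π)) := by
  have hmem z := Submodule.subset_span (R := ℂ) (Set.mem_range_self (f := vecState π) z)
  have h4 : (4 : ℂ) • vecFunctional π x y ∈ Submodule.span ℂ (Set.range (vecState π)) := by
    rw [four_smul_vecFunctional]
    exact add_mem (sub_mem (sub_mem (hmem _) (hmem _)) (Submodule.smul_mem _ _ (hmem _)))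
      (Submodule.smul_mem _ _ (hmem _))
  simpa using Submodule.smul_mem _ (4 : ℂ)⁻¹ h4

theorem dualMap_mulLeftRight_vecState (b c : A) (ζ : H) :
    dualMap (mulLeftRight ℂ A b c) (vecState π ζ) = vecFunctional π (π (star b) ζ) (π c ζ) := by
  refine DFunLike.ext _ _ fun a => ?_
  simp [map_star, star_eq_adjoint, adjoint_inner_left]

theorem dualMap_mulLeftRight_star_vecState (a : A) (ξ : H) :
    dualMap (mulLeftRight ℂ A (star a) a) (vecState π ξ) = vecState π (π a ξ) := by
  rw [dualMap_mulLeftRight_vecState, star_star]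
  rfl

theorem dualMap_mulLeftRight_mem_closure_span_vecState (b c : A) {φ : WeakDual ℂ A}
    (hφ : φ ∈ closure (Submodule.span ℂ (Set.range (vecState π)) : Set (WeakDual ℂ A))) :
    dualMap (mulLeftRight ℂ A b c) φ ∈
      closure (Submodule.span ℂ (Set.range (vecState π)) : Set (WeakDual ℂ A)) := by
  refine Set.MapsTo.closure (fun ψ hψ => ?_) (dualMap _).continuous hφ
  have hspan : (Submodule.span ℂ (Set.range (vecState π))).map
      (dualMap (mulLeftRight ℂ A b c) : WeakDual ℂ A →ₗ[ℂ] WeakDual ℂ A)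
      ≤ Submodule.span ℂ (Set.range (vecState π)) := by
    rw [Submodule.map_span_le]
    rintro _ ⟨ζ, rfl⟩
    rw [coe_coe, dualMap_mulLeftRight_vecState]
    exact vecFunctional_mem_span_vecState π _ _
  exact hspan ⟨ψ, hψ, rfl⟩

theorem vecState_mem_iff_forall_mem_preannihilator {V : Submodule ℂ (WeakDual ℂ A)}
    (hV : IsClosed (V : Set (WeakDual ℂ A)))
    (hV_mul : ∀ b, ∀ φ ∈ V, dualMap (mulLeftRight ℂ A b 1) φ ∈ V) (ξ : H) :
    vecState π ξ ∈ V ↔ ∀ a ∈ preannihilator (V : Set (WeakDual ℂ A)), π a ξ = 0 := by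
  rw [mem_iff_forall_mem_preannihilator hV]
  refine ⟨fun h a ha => ?_, fun h a ha => by simp [h a ha]⟩
  have h_star_mul : star a * a ∈ preannihilator (V : Set (WeakDual ℂ A)) := fun φ hφ => by
    simpa using ha _ (hV_mul (star a) φ hφ)
  exact inner_self_eq_zero.mp (vecState_apply_star_mul_self π ξ a ▸ h _ h_star_mul)

end Representation

theorem statement1 {A H₁ H₂ : Type*} [CStarAlgebra A]
    [NormedAddCommGroup H₁] [InnerProductSpace ℂ H₁] [CompleteSpace H₁]
    [NormedAddCommGroup H₂] [InnerProductSpace ℂ H₂] [CompleteSpace H₂]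
    (π₁ : A →⋆ₐ[ℂ] (H₁ →L[ℂ] H₁)) (π₂ : A →⋆ₐ[ℂ] (H₂ →L[ℂ] H₂))
    (V : Set (WeakDual ℂ A))
    (hV : V = closure (Submodule.span ℂ (Set.range (vecState π₂)) : Set (WeakDual ℂ A)))
    (W : Set H₁) (hW : W = {ξ : H₁ | vecState π₁ ξ ∈ V}) :
    IsClosed W ∧ (∃ S : Submodule ℂ H₁, (S : Set H₁) = W) ∧
      (∀ a : A, ∀ ξ ∈ W, π₁ a ξ ∈ W) := by
  subst hV hW
  set S := Submodule.span ℂ (Set.range (vecState π₂))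
  have hV_mul b c : ∀ φ ∈ S.topologicalClosure, dualMap (mulLeftRight ℂ A b c) φ ∈
      S.topologicalClosure := fun _ => dualMap_mulLeftRight_mem_closure_span_vecState π₂ b c
  have hW := vecState_mem_iff_forall_mem_preannihilator π₁ S.isClosed_topologicalClosure
    (fun b => hV_mul b 1)
  refine ⟨isClosed_closure.preimage (continuous_vecState π₁),
    ⟨⨅ a ∈ preannihilator (closure (S : Set (WeakDual ℂ A))),
      LinearMap.ker (π₁ a : H₁ →ₗ[ℂ] H₁), ?_⟩,
    fun a ξ hξ => ?_⟩
  · ext ξ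
    simp only [SetLike.mem_coe, Submodule.mem_iInf, LinearMap.mem_ker, Set.mem_ofPred_eq]
    exact (hW ξ).symm
  · change vecState π₁ (π₁ a ξ) ∈ S.topologicalClosure
    rw [← dualMap_mulLeftRight_star_vecState]
    exact hV_mul (star a) a _ hξ
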